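/- Let H₁ and H₂ be complex Hilbert spaces, X : H₂ → H₁ and Y : H₁ → H₂ bounded linear operators, and let T be the off-diagonal operator matrix on H₁ ⊕ H₂ given by T(x₁, x₂) = (X x₂, Y x₁). Set P = XX* + Y*Y (an operator on H₁). Then w(T)⁴ ≥ (1/16)‖P‖² + (1/4)c(XY)² + (1/8)m((XY)P + P(XY)). -/

import Mathlib

noncomputable def numRadius {H : Type*} [NormedAddCommGroup H] [InnerProductSpace ℂ H]
    (T : H →L[ℂ] H) : ℝ :=
  sSup {r : ℝ | ∃ x : H, ‖x‖ = 1 ∧ r = ‖(inner ℂ (T x) x : ℂ)‖}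

noncomputable def crawford {H : Type*} [NormedAddCommGroup H] [InnerProductSpace ℂ H]
    (T : H →L[ℂ] H) : ℝ :=
  sInf {r : ℝ | ∃ x : H, ‖x‖ = 1 ∧ r = ‖(inner ℂ (T x) x : ℂ)‖}

noncomputable def reOp {H : Type*} [NormedAddCommGroup H] [InnerProductSpace ℂ H]
    [CompleteSpace H] (A : H →L[ℂ] H) : H →L[ℂ] H :=
  (2 : ℂ)⁻¹ • (A + ContinuousLinearMap.adjoint A)

noncomputable def cNum {H : Type*} [NormedAddCommGroup H] [InnerProductSpace ℂ H]
    [CompleteSpace H] (T : H →L[ℂ] H) : ℝ :=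
  ⨅ θ : ℝ, sInf {r : ℝ | ∃ x : H, ‖x‖ = 1 ∧ r = ‖reOp (Complex.exp (θ * Complex.I) • T) x‖}

/-!
For a unimodular `a`, the self-adjoint operator `A = Re(a T)` satisfies `‖A‖ ≤ w(T)` and is again
off-diagonal, with entries `(a X + ā Y*) / 2` and `(a Y + ā X*) / 2`. Hence
`A² (x, 0) = ((2 Re(a² XY) + P) x / 4, 0)`, so `‖2 Re(a² XY) x + P x‖ ≤ 4 w(T)²` for unit `x`.
Expanding the square, the cross term is `Re ⟨Re(a² XY) x, P x⟩ = Re(ā² ⟨(XY P + P XY) x, x⟩) / 2`,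
which is `|⟨(XY P + P XY) x, x⟩| / 2` once `a²` is the phase of that number. Together with
`‖Re(a² XY) x‖ ≥ c(XY)`, this bounds `‖P x‖²` uniformly in `x`, hence `‖P‖²`.
-/
open ContinuousLinearMap
open scoped InnerProductSpace InnerProduct ComplexConjugate

lemma ContinuousLinearMap.sq_opNorm_le_of_unit_norm {𝕜 E F : Type*} [RCLike 𝕜]
    [NormedAddCommGroup E] [NormedSpace 𝕜 E] [Nontrivial E] [NormedAddCommGroup F]
    [NormedSpace 𝕜 F] {f : E →L[𝕜] F} {K : ℝ} (h : ∀ x, ‖x‖ = 1 → ‖f x‖ ^ 2 ≤ K) :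
    ‖f‖ ^ 2 ≤ K := by
  obtain ⟨x, hx⟩ := exists_ne (0 : E)
  have hK : 0 ≤ K := (sq_nonneg _).trans (h _ (norm_smul_inv_norm (𝕜 := 𝕜) hx))
  calc ‖f‖ ^ 2 ≤ √K ^ 2 := by
        gcongr
        exact opNorm_le_of_unit_norm (Real.sqrt_nonneg K) fun x hx =>
          Real.le_sqrt_of_sq_le (h x hx)
    _ = K := Real.sq_sqrt hK

lemma Complex.conj_exp_arg_mul_I_mul (z : ℂ) : conj (exp (z.arg * I)) * z = ‖z‖ := by
  conv_lhs => rw [← norm_mul_exp_arg_mul_I z]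
  rw [← exp_conj, map_mul, conj_ofReal, conj_I, mul_left_comm, ← exp_add]
  simp

lemma ContinuousLinearMap.adjoint_smul {𝕜 E F : Type*} [RCLike 𝕜] [NormedAddCommGroup E]
    [InnerProductSpace 𝕜 E] [CompleteSpace E] [NormedAddCommGroup F] [InnerProductSpace 𝕜 F]
    [CompleteSpace F] (c : 𝕜) (A : E →L[𝕜] F) : adjoint (c • A) = conj c • adjoint A :=
  map_smulₛₗ adjoint c A

section NumericalRange

variable {H : Type*} [NormedAddCommGroup H] [InnerProductSpace ℂ H]

lemma numRadius_nonneg (T : H →L[ℂ] H) : 0 ≤ numRadius T :=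
  Real.sSup_nonneg fun _ ⟨_, _, hr⟩ => hr ▸ norm_nonneg _

lemma norm_inner_apply_self_le_numRadius (T : H →L[ℂ] H) {x : H} (hx : ‖x‖ = 1) :
    ‖⟪T x, x⟫_ℂ‖ ≤ numRadius T := by
  refine le_csSup ⟨‖T‖, ?_⟩ ⟨x, hx, rfl⟩
  rintro _ ⟨y, hy, rfl⟩
  calc ‖⟪T y, y⟫_ℂ‖ ≤ ‖T y‖ * ‖y‖ := norm_inner_le_norm _ _
    _ ≤ ‖T‖ * ‖y‖ * ‖y‖ := by gcongr; exact T.le_opNorm y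
    _ = ‖T‖ := by rw [hy, mul_one, mul_one]

lemma numRadius_le {T : H →L[ℂ] H} {M : ℝ} (hM : 0 ≤ M)
    (h : ∀ x : H, ‖x‖ = 1 → ‖⟪T x, x⟫_ℂ‖ ≤ M) : numRadius T ≤ M :=
  Real.sSup_le (by rintro _ ⟨x, hx, rfl⟩; exact h x hx) hM

lemma crawford_le (T : H →L[ℂ] H) {x : H} (hx : ‖x‖ = 1) : crawford T ≤ ‖⟪T x, x⟫_ℂ‖ :=
  csInf_le ⟨0, by rintro _ ⟨y, -, rfl⟩; exact norm_nonneg _⟩ ⟨x, hx, rfl⟩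

lemma crawford_eq_zero_of_subsingleton [Subsingleton H] (T : H →L[ℂ] H) : crawford T = 0 := by
  have : {r : ℝ | ∃ x : H, ‖x‖ = 1 ∧ r = ‖⟪T x, x⟫_ℂ‖} = ∅ :=
    Set.eq_empty_of_forall_notMem fun _ ⟨x, hx, _⟩ => by simp [Subsingleton.elim x 0] at hx
  rw [crawford, this, Real.sInf_empty]

lemma IsSelfAdjoint.norm_le_numRadius [CompleteSpace H] {B : H →L[ℂ] H} (hB : IsSelfAdjoint B) :
    ‖B‖ ≤ numRadius B := by
  have hunit : ∀ u : H, ‖u‖ = 1 → |B.rayleighQuotient u| ≤ numRadius B := fun u hu => by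
    rw [rayleighQuotient, reApplyInnerSelf_apply, hu, one_pow, div_one]
    exact (Complex.abs_re_le_norm _).trans (norm_inner_apply_self_le_numRadius B hu)
  rw [B.norm_eq_iSup_rayleighQuotient hB.isSymmetric]
  refine ciSup_le fun x => ?_
  rcases eq_or_ne x 0 with rfl | hx
  · simpa using numRadius_nonneg B
  rw [← B.rayleigh_smul x (c := (‖x‖⁻¹ : ℂ)) (by simpa using hx)]
  exact hunit _ (norm_smul_inv_norm hx)

end NumericalRange

section RealPart

variable {H : Type*} [NormedAddCommGroup H] [InnerProductSpace ℂ H] [CompleteSpace H]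

lemma reOp_apply (A : H →L[ℂ] H) (x : H) : reOp A x = (2 : ℂ)⁻¹ • (A x + adjoint A x) := rfl

lemma isSelfAdjoint_reOp (A : H →L[ℂ] H) : IsSelfAdjoint (reOp A) := by
  have h2 : IsSelfAdjoint (2⁻¹ : ℂ) := by simp [IsSelfAdjoint]
  rw [reOp, ← star_eq_adjoint, add_comm]
  exact h2.smul (IsSelfAdjoint.star_add_self A)

lemma inner_reOp_apply_self (A : H →L[ℂ] H) (x : H) :
    ⟪reOp A x, x⟫_ℂ = (⟪A x, x⟫_ℂ).re := by
  rw [reOp_apply, inner_smul_left, inner_add_left, adjoint_inner_left, ← inner_conj_symm x (A x),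
    Complex.add_conj, map_inv₀, map_ofNat]
  push_cast
  field_simp

lemma numRadius_reOp_smul_le (T : H →L[ℂ] H) {a : ℂ} (ha : ‖a‖ = 1) :
    numRadius (reOp (a • T)) ≤ numRadius T := by
  refine numRadius_le (numRadius_nonneg T) fun x hx => ?_
  rw [inner_reOp_apply_self, Complex.norm_real, Real.norm_eq_abs]
  refine (Complex.abs_re_le_norm _).trans ?_
  rw [smul_apply, inner_smul_left, norm_mul, Complex.norm_conj, ha, one_mul]
  exact norm_inner_apply_self_le_numRadius T hx

lemma norm_reOp_smul_le_numRadius (T : H →L[ℂ] H) {a : ℂ} (ha : ‖a‖ = 1) :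
    ‖reOp (a • T)‖ ≤ numRadius T :=
  (isSelfAdjoint_reOp _).norm_le_numRadius.trans (numRadius_reOp_smul_le T ha)

lemma cNum_nonneg (T : H →L[ℂ] H) : 0 ≤ cNum T :=
  Real.iInf_nonneg fun _ => Real.sInf_nonneg fun _ ⟨_, _, hr⟩ => hr ▸ norm_nonneg _

lemma cNum_le (T : H →L[ℂ] H) (θ : ℝ) {x : H} (hx : ‖x‖ = 1) :
    cNum T ≤ ‖reOp (Complex.exp (θ * Complex.I) • T) x‖ := by
  refine (ciInf_le ⟨0, ?_⟩ θ).trans (csInf_le ⟨0, ?_⟩ ⟨x, hx, rfl⟩)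
  · rintro _ ⟨θ', rfl⟩
    exact Real.sInf_nonneg fun _ ⟨_, _, hr⟩ => hr ▸ norm_nonneg _
  · rintro _ ⟨y, -, rfl⟩
    exact norm_nonneg _

lemma cNum_eq_zero_of_subsingleton [Subsingleton H] (T : H →L[ℂ] H) : cNum T = 0 := by
  have (θ : ℝ) : {r : ℝ | ∃ x : H, ‖x‖ = 1 ∧
      r = ‖reOp (Complex.exp (θ * Complex.I) • T) x‖} = ∅ :=
    Set.eq_empty_of_forall_notMem fun _ ⟨x, hx, _⟩ => by simp [Subsingleton.elim x 0] at hx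
  simp only [cNum, this, Real.sInf_empty, ciInf_const]

lemma re_inner_reOp_smul_apply {C P : H →L[ℂ] H} (hP : IsSelfAdjoint P) (b : ℂ) (x : H) :
    (⟪reOp (b • C) x, P x⟫_ℂ).re = 2⁻¹ * (conj b * ⟪(C ∘L P + P ∘L C) x, x⟫_ℂ).re := by
  have hPC : ⟪C x, P x⟫_ℂ = ⟪P (C x), x⟫_ℂ := by
    rw [← adjoint_inner_left, hP.adjoint_eq]
  have hCP : ⟪adjoint C x, P x⟫_ℂ = conj ⟪C (P x), x⟫_ℂ := by
    rw [adjoint_inner_left, inner_conj_symm]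
  rw [reOp_apply]
  simp only [inner_smul_left, inner_add_left, smul_apply, adjoint_smul, add_apply, comp_apply,
    hPC, hCP]
  generalize ⟪P (C x), x⟫_ℂ = t, ⟪C (P x), x⟫_ℂ = s
  simp [Complex.mul_re]
  ring

end RealPart

section OffDiagonal

variable {H₁ H₂ : Type*} [NormedAddCommGroup H₁] [InnerProductSpace ℂ H₁]
  [NormedAddCommGroup H₂] [InnerProductSpace ℂ H₂]

def IsOffDiag (X : H₂ →L[ℂ] H₁) (Y : H₁ →L[ℂ] H₂)
    (T : WithLp 2 (H₁ × H₂) →L[ℂ] WithLp 2 (H₁ × H₂)) : Prop :=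
  ∀ x : WithLp 2 (H₁ × H₂),
    WithLp.equiv 2 (H₁ × H₂) (T x) =
      (X (WithLp.equiv 2 (H₁ × H₂) x).2, Y (WithLp.equiv 2 (H₁ × H₂) x).1)

variable {X X' : H₂ →L[ℂ] H₁} {Y Y' : H₁ →L[ℂ] H₂}
  {T T' : WithLp 2 (H₁ × H₂) →L[ℂ] WithLp 2 (H₁ × H₂)}

namespace IsOffDiag

lemma apply (hT : IsOffDiag X Y T) (v : WithLp 2 (H₁ × H₂)) :
    T v = WithLp.toLp 2 (X v.snd, Y v.fst) :=
  (WithLp.equiv 2 (H₁ × H₂)).injective (hT v)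

lemma of_apply (h : ∀ v, T v = WithLp.toLp 2 (X v.snd, Y v.fst)) : IsOffDiag X Y T :=
  fun v => congrArg (WithLp.equiv 2 (H₁ × H₂)) (h v)

lemma add (hT : IsOffDiag X Y T) (hT' : IsOffDiag X' Y' T') :
    IsOffDiag (X + X') (Y + Y') (T + T') :=
  of_apply fun v => by rw [add_apply, hT.apply, hT'.apply]; rfl

lemma smul (hT : IsOffDiag X Y T) (c : ℂ) : IsOffDiag (c • X) (c • Y) (c • T) :=
  of_apply fun v => by rw [smul_apply, hT.apply]; rfl

lemma adjoint [CompleteSpace H₁] [CompleteSpace H₂] (hT : IsOffDiag X Y T) :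
    IsOffDiag (Y†) (X†) (T†) := by
  refine of_apply fun v => ext_inner_left ℂ fun w => ?_
  simp [adjoint_inner_right, hT.apply, add_comm]

lemma reOp_smul [CompleteSpace H₁] [CompleteSpace H₂] (hT : IsOffDiag X Y T) (a : ℂ) :
    IsOffDiag ((2 : ℂ)⁻¹ • (a • X + conj a • Y†))
      ((2 : ℂ)⁻¹ • (a • Y + conj a • X†)) (reOp (a • T)) := by
  rw [reOp, adjoint_smul]
  exact ((hT.smul a).add (hT.adjoint.smul (conj a))).smul _

lemma norm_apply_apply_le (hT : IsOffDiag X Y T) (x : H₁) : ‖X (Y x)‖ ≤ ‖T‖ ^ 2 * ‖x‖ := by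
  have hTT : T (T (WithLp.toLp 2 (x, 0))) = WithLp.toLp 2 (X (Y x), 0) := by simp [hT.apply]
  calc ‖X (Y x)‖ = ‖T (T (WithLp.toLp 2 (x, 0)))‖ := by rw [hTT, WithLp.norm_toLp_fst]
    _ ≤ ‖T‖ * (‖T‖ * ‖WithLp.toLp 2 (x, (0 : H₂))‖) := T.le_opNorm_of_le (T.le_opNorm _)
    _ = ‖T‖ ^ 2 * ‖x‖ := by rw [WithLp.norm_toLp_fst]; ring

end IsOffDiag

lemma reOp_smul_entries_comp_eq [CompleteSpace H₁] [CompleteSpace H₂] {a : ℂ} (ha : ‖a‖ = 1)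
    (X : H₂ →L[ℂ] H₁) (Y : H₁ →L[ℂ] H₂) :
    ((2 : ℂ)⁻¹ • (a • X + conj a • Y†)) ∘L ((2 : ℂ)⁻¹ • (a • Y + conj a • X†)) =
      (4 : ℂ)⁻¹ • ((2 : ℂ) • reOp (a ^ 2 • (X ∘L Y)) + (X ∘L X† + Y† ∘L Y)) := by
  have haa : conj a * a = 1 := by
    rw [← Complex.normSq_eq_conj_mul_self, Complex.normSq_eq_norm_sq, ha]; norm_num
  ext x
  simp only [reOp_apply, adjoint_smul, adjoint_comp, comp_apply, add_apply, smul_apply, map_add,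
    map_smul]
  rw [map_pow]
  match_scalars <;> first | ring1 | linear_combination (4 : ℂ)⁻¹ * haa

lemma IsOffDiag.four_mul_cNum_sq_add_two_mul_crawford_add_norm_sq_le [CompleteSpace H₁]
    [CompleteSpace H₂] (hT : IsOffDiag X Y T) {P : H₁ →L[ℂ] H₁}
    (hP : P = X ∘L X† + Y† ∘L Y) {x : H₁} (hx : ‖x‖ = 1) :
    4 * cNum (X ∘L Y) ^ 2 + 2 * crawford ((X ∘L Y) ∘L P + P ∘L (X ∘L Y)) + ‖P x‖ ^ 2 ≤
      16 * numRadius T ^ 4 := by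
  set C := X ∘L Y
  set q := ⟪(C ∘L P + P ∘L C) x, x⟫_ℂ
  set a := Complex.exp ((q.arg / 2 : ℝ) * Complex.I)
  have ha : ‖a‖ = 1 := Complex.norm_exp_ofReal_mul_I _
  have ha2 : a ^ 2 = Complex.exp (q.arg * Complex.I) := by
    rw [← Complex.exp_nat_mul]; push_cast; ring_nf
  set u := reOp (Complex.exp (q.arg * Complex.I) • C) x
  have hPsa : IsSelfAdjoint P := by
    rw [hP, isSelfAdjoint_iff', map_add, adjoint_comp, adjoint_comp, adjoint_adjoint,
      adjoint_adjoint]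
  have hbound : ‖(2 : ℂ) • u + P x‖ ≤ 4 * numRadius T ^ 2 := by
    have h := (hT.reOp_smul a).norm_apply_apply_le x
    rw [← comp_apply, reOp_smul_entries_comp_eq ha, ha2, ← hP, hx, mul_one, smul_apply, add_apply,
      smul_apply, norm_smul] at h
    calc ‖(2 : ℂ) • u + P x‖ = 4 * (‖(4 : ℂ)⁻¹‖ * ‖(2 : ℂ) • u + P x‖) := by norm_num; ring
      _ ≤ 4 * ‖reOp (a • T)‖ ^ 2 := by gcongr
      _ ≤ 4 * numRadius T ^ 2 := by gcongr; exact norm_reOp_smul_le_numRadius T ha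
  have hcross : (⟪u, P x⟫_ℂ).re = 2⁻¹ * ‖q‖ := by
    rw [re_inner_reOp_smul_apply hPsa, Complex.conj_exp_arg_mul_I_mul, Complex.ofReal_re]
  have hexpand : ‖(2 : ℂ) • u + P x‖ ^ 2 = 4 * ‖u‖ ^ 2 + 4 * (⟪u, P x⟫_ℂ).re + ‖P x‖ ^ 2 := by
    rw [norm_add_sq (𝕜 := ℂ), norm_smul, inner_smul_left]
    norm_num
    ring
  have hcu : cNum C ^ 2 ≤ ‖u‖ ^ 2 := pow_le_pow_left₀ (cNum_nonneg C) (cNum_le C q.arg hx) 2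
  have hmq : crawford (C ∘L P + P ∘L C) ≤ ‖q‖ := crawford_le _ hx
  have hsq := pow_le_pow_left₀ (norm_nonneg _) hbound 2
  rw [hexpand, hcross] at hsq
  linarith

end OffDiagonal

theorem numRadius_offdiag_pow_four_lower'
    {H₁ H₂ : Type*} [NormedAddCommGroup H₁] [InnerProductSpace ℂ H₁]
    [NormedAddCommGroup H₂] [InnerProductSpace ℂ H₂]
    [CompleteSpace H₁] [CompleteSpace H₂]
    (X : H₂ →L[ℂ] H₁) (Y : H₁ →L[ℂ] H₂)
    (T : WithLp 2 (H₁ × H₂) →L[ℂ] WithLp 2 (H₁ × H₂))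
    (hT : ∀ x : WithLp 2 (H₁ × H₂),
      WithLp.equiv 2 (H₁ × H₂) (T x) =
        (X (WithLp.equiv 2 (H₁ × H₂) x).2, Y (WithLp.equiv 2 (H₁ × H₂) x).1))
    (P : H₁ →L[ℂ] H₁)
    (hP : P = X.comp (ContinuousLinearMap.adjoint X) + (ContinuousLinearMap.adjoint Y).comp Y) :
    (numRadius T) ^ 4 ≥ (1 / 16 : ℝ) * ‖P‖ ^ 2 + (1 / 4 : ℝ) * (cNum (X.comp Y)) ^ 2
      + (1 / 8 : ℝ) * crawford ((X.comp Y).comp P + P.comp (X.comp Y)) := by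
  rcases subsingleton_or_nontrivial H₁ with _ | _
  · have hP0 : P = 0 := ext fun _ => Subsingleton.elim _ _
    simp [hP0, cNum_eq_zero_of_subsingleton, crawford_eq_zero_of_subsingleton, numRadius_nonneg]
  · have hnorm := sq_opNorm_le_of_unit_norm (f := P)
      (K := 16 * numRadius T ^ 4 - 4 * cNum (X ∘L Y) ^ 2
        - 2 * crawford ((X ∘L Y) ∘L P + P ∘L (X ∘L Y))) fun x hx => by
      linarith [IsOffDiag.four_mul_cNum_sq_add_two_mul_crawford_add_norm_sq_le hT hP hx]
    linarith
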